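/- (Theorem 2, convergence rate of the discretized distributed AGM.) Consider the algorithm initialized with X₀ = Z₀ ∈ H, with first-iteration updates X₀⁺ = X₀, Z₁ = Z₀, X₁ = X₀, and for k ≥ 1 the updates X_k⁺ = X_k − (s_k/2)·G_k(X_k), Z_{k+1} = Z_k − s_k·θ_k·G_k(X_k), X_{k+1} = (θ_k²/θ_{k+1}²)·X_k⁺ + (1 − θ_k²/θ_{k+1}²)·Z_{k+1}. Suppose the step sizes satisfy: s₀ > 0; 0 < s₀ ≤ s₁ ≤ 2/L̃₁ and r₁ ≥ 0; for every k ≥ 1, s_{k+1} > 0 satisfies the four-case bound (i) s_{k+1}·b_{k+1} ≤ 4·a_{k+1} if w_{k+1} ≤ 0 and r_{k+1} ≥ 0, (ii) s_{k+1}·(A_k·b_{k+1} + θ_{k+1}·(−r_{k+1})) ≤ 4·A_k·a_{k+1} if w_{k+1} ≤ 0 and r_{k+1} < 0, (iii) s_{k+1}·b̃_{k+1} ≤ 4·ã_{k+1} if w_{k+1} > 0 and r_{k+1} ≥ 0, (iv) s_{k+1}·(A_k·b̃_{k+1} + θ_{k+1}·(−r_{k+1})) ≤ 4·A_k·ã_{k+1}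 if w_{k+1} > 0 and r_{k+1} < 0; and additionally, for every k ≥ 1 (respectively k ≥ 2 as in the paper, strengthened to k ≥ 1 for the initial case), s_k ≤ s_{k+1} and s_k ≤ 1/max{λ̄, (kh)^{−β}·L_f} (i.e., s_k ≤ 2/L̃_k). Then for every iteration k ≥ 1, F(X_k⁺) − F* ≤ (2·h^β·‖X₀ − X*‖² / s₀) · k^{−(2−β)}; i.e., the algorithm converges at rate O(1/k^{2−β}). -/

import Mathlib

open scoped RealInnerProductSpace

noncomputable section

/-- `θ_k = k/2`. -/
def thetaSeq (k : ℕ) : ℝ := (k : ℝ) / 2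

/-- `c_k = θ_{k+1} / (θ_{k+1}² − θ_k²)`. -/
def cSeq (k : ℕ) : ℝ := thetaSeq (k + 1) / (thetaSeq (k + 1) ^ 2 - thetaSeq k ^ 2)

/-- `A_k = c_k · θ_k²`. -/
def ASeq (k : ℕ) : ℝ := cSeq k * thetaSeq k ^ 2

variable {H : Type*} [NormedAddCommGroup H] [InnerProductSpace ℝ H] [FiniteDimensional ℝ H]

/-- `G_k(Y) = (2θ_k h)^{−β} ∇F(Y) + L̃Y`. -/
def Gmap (h β : ℝ) (F : H → ℝ) (L : H →L[ℝ] H) (k : ℕ) (Y : H) : H :=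
  ((2 * thetaSeq k * h) ^ (-β)) • gradient F Y + L Y

/-- `L̃_k = 2·max{λ̄, (kh)^{−β}·L_f}`. -/
def LSmooth (lambar Lf h β : ℝ) (k : ℕ) : ℝ :=
  2 * max lambar (((k : ℝ) * h) ^ (-β) * Lf)

/-- Lyapunov function `V_k` (for `k ≥ 1`). -/
def VSeq (h β : ℝ) (F : H → ℝ) (L : H →L[ℝ] H) (Xs : H) (X Z : ℕ → H) (s : ℕ → ℝ)
    (k : ℕ) : ℝ :=
  2 * ASeq k * (((2 * thetaSeq k * h) ^ (-β)) * (F (X k) - F Xs)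
      + (1 / 2) * ⟪X k - Xs, L (X k - Xs)⟫
      - (s k / 4) * ‖Gmap h β F L k (X k)‖ ^ 2)
    + (1 / s k) * ‖Z (k + 1) - Xs‖ ^ 2

/-- `a_{k+1}` (indexed so that `aSeq … k = a_{k+1}`). -/
def aSeq (h β : ℝ) (F : H → ℝ) (L : H →L[ℝ] H) (Xs : H) (X : ℕ → H) (k : ℕ) : ℝ :=
  ((2 * thetaSeq k * h) ^ (-β)) * (F (X k) - F Xs)
    + (1 / 2) * ⟪X k - Xs, L (X k - Xs)⟫
    - ((2 * thetaSeq (k + 1) * h) ^ (-β)) * (F (X (k + 1)) - F Xs)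
    - (1 / 2) * ⟪X (k + 1) - Xs, L (X (k + 1) - Xs)⟫
    - ⟪Gmap h β F L (k + 1) (X (k + 1)), X k - X (k + 1)⟫

/-- `b_{k+1}` (indexed so that `bSeq … k = b_{k+1}`). -/
def bSeq (h β : ℝ) (F : H → ℝ) (L : H →L[ℝ] H) (X : ℕ → H) (k : ℕ) : ℝ :=
  ‖Gmap h β F L k (X k) - Gmap h β F L (k + 1) (X (k + 1))‖ ^ 2

/-- `ã_{k+1}` (indexed so that `atilSeq … k = ã_{k+1}`). -/
def atilSeq (h β : ℝ) (F : H → ℝ) (L : H →L[ℝ] H) (Xs : H) (X : ℕ → H) (s : ℕ → ℝ)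
    (k : ℕ) : ℝ :=
  aSeq h β F L Xs X k
    + (s k / 2) * ⟪Gmap h β F L (k + 1) (X (k + 1)), Gmap h β F L k (X k)⟫

/-- `b̃_{k+1}` (indexed so that `btilSeq … k = b̃_{k+1}`). -/
def btilSeq (h β : ℝ) (F : H → ℝ) (L : H →L[ℝ] H) (X : ℕ → H) (k : ℕ) : ℝ :=
  ‖Gmap h β F L k (X k)‖ ^ 2 + ‖Gmap h β F L (k + 1) (X (k + 1))‖ ^ 2

/-- `w_{k+1}` (indexed so that `wSeq … k = w_{k+1}`). -/
def wSeq (h β : ℝ) (F : H → ℝ) (L : H →L[ℝ] H) (X : ℕ → H) (k : ℕ) : ℝ :=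
  ⟪Gmap h β F L (k + 1) (X (k + 1)), Gmap h β F L k (X k)⟫

/-- `r_{k+1}` (indexed so that `rSeq … k = r_{k+1}`). -/
def rSeq (h β : ℝ) (F : H → ℝ) (L : H →L[ℝ] H) (Xs : H) (X : ℕ → H) (k : ℕ) : ℝ :=
  -‖((2 * thetaSeq (k + 1) * h) ^ (-β)) • gradient F Xs‖ ^ 2
    + 2 * ⟪((2 * thetaSeq (k + 1) * h) ^ (-β)) • gradient F Xs,
        ((2 * thetaSeq (k + 1) * h) ^ (-β)) • gradient F Xs
          - Gmap h β F L (k + 1) (X (k + 1))⟫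

/-- `q_{k+1}` (indexed so that `qSeq … k = q_{k+1}`). -/
def qSeq (h β : ℝ) (F : H → ℝ) (L : H →L[ℝ] H) (Xs : H) (X : ℕ → H) (s : ℕ → ℝ)
    (k : ℕ) : ℝ :=
  aSeq h β F L Xs X k
    - (s (k + 1) / 4) * ‖Gmap h β F L k (X k)‖ ^ 2
    - (s (k + 1) / 4) * ‖Gmap h β F L (k + 1) (X (k + 1))‖ ^ 2
    + (s k / 2) * ⟪Gmap h β F L (k + 1) (X (k + 1)), Gmap h β F L k (X k)⟫

/-!
Let `Φ_k(Y) = (kh)^{−β} (F(Y) − F*) + ½⟨Y − X*, L̃(Y − X*)⟩` (`penalizedGap`). It is convex with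
gradient `G_k`, obeys a quadratic upper bound of curvature `(kh)^{−β} L_f + λ̄ ≤ L̃_k`, and vanishes
at its stationary point `X*`. As `s_k ≤ 2 / L̃_k`, this gives
`0 ≤ Φ_k(Y) ≤ ⟨G_k(Y), Y − X*⟩ − s_k ‖G_k(Y)‖² / 4`, and the gradient step to `X_k⁺` decreases
`Φ_k` by `s_k ‖G_k(X_k)‖² / 4`.

With these estimates the Lyapunov function `V_k` is non-increasing: since `X_{k+1}` is the
convex combination of `X_k⁺` and `Z_{k+1}` with weights `A_k : θ_{k+1}`, the change of
`‖Z − X*‖² / s` is expressed through inner products with `G_{k+1}(X_{k+1})`, and the step-size rule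
absorbs the remainder. As `∇F(X*) = 0`, every `r_{k+1}` vanishes, so only cases (i) and (iii) of the
rule occur. Finally `2 A_k (kh)^{−β} (F(X_k⁺) − F*) ≤ V_k ≤ V_1 ≤ ‖X₀ − X*‖² / s₀` and
`4 A_k ≥ k²` give the rate.
-/

section ConvexSmooth

variable {E : Type*} [NormedAddCommGroup E] [InnerProductSpace ℝ E]

theorem IsLocalMin.gradient_eq_zero [CompleteSpace E] {f : E → ℝ} {a : E}
    (h : IsLocalMin f a) : gradient f a = 0 := by
  simp [gradient, h.fderiv_eq_zero]

theorem hasDerivAt_apply_add_smul [CompleteSpace E] {f : E → ℝ} (hf : Differentiable ℝ f)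
    (x d : E) (t : ℝ) :
    HasDerivAt (fun t : ℝ => f (x + t • d)) ⟪gradient f (x + t • d), d⟫ t := by
  have hline : HasDerivAt (fun t : ℝ => x + t • d) d t := by
    simpa using ((hasDerivAt_id t).smul_const d).const_add x
  simpa [Function.comp_def] using
    (hf (x + t • d)).hasGradientAt.hasFDerivAt.comp_hasDerivAt t hline

theorem ConvexOn.add_inner_gradient_le [CompleteSpace E] {f : E → ℝ}
    (hconv : ConvexOn ℝ Set.univ f) (hf : Differentiable ℝ f) (x y : E) :
    f x + ⟪gradient f x, y - x⟫ ≤ f y := by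
  have hline : ConvexOn ℝ Set.univ (fun t : ℝ => f (x + t • (y - x))) := by
    simpa [Function.comp_def, AffineMap.lineMap_apply, add_comm] using
      hconv.comp_affineMap (AffineMap.lineMap x y)
  have hderiv := hasDerivAt_apply_add_smul hf x (y - x) 0
  rw [zero_smul, add_zero] at hderiv
  have hslope := hline.le_slope_of_hasDerivAt (Set.mem_univ 0) (Set.mem_univ 1) one_pos hderiv
  simp only [slope_def_field, one_smul, zero_smul, add_zero, add_sub_cancel, sub_zero,
    div_one] at hslope
  linarith

theorem le_add_inner_gradient_add_sq [CompleteSpace E] {f : E → ℝ} (hf : Differentiable ℝ f)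
    {Λ : ℝ} (hlip : ∀ x y, ‖gradient f x - gradient f y‖ ≤ Λ * ‖x - y‖) (x d : E) :
    f (x + d) ≤ f x + ⟪gradient f x, d⟫ + Λ / 2 * ‖d‖ ^ 2 := by
  set ψ : ℝ → ℝ := fun t => Λ * ‖d‖ ^ 2 / 2 * t ^ 2 - f (x + t • d) + ⟪gradient f x, d⟫ * t
  have hψ : ∀ t, HasDerivAt ψ (Λ * ‖d‖ ^ 2 * t - ⟪gradient f (x + t • d), d⟫
      + ⟪gradient f x, d⟫) t := by
    intro t
    have hsq := (hasDerivAt_pow 2 t).const_mul (Λ * ‖d‖ ^ 2 / 2)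
    have hlin := (hasDerivAt_id t).const_mul ⟪gradient f x, d⟫
    refine ((hsq.sub (hasDerivAt_apply_add_smul hf x d t)).add hlin).congr_deriv ?_
    push_cast
    ring
  have hmono : MonotoneOn ψ (Set.Icc 0 1) := by
    refine monotoneOn_of_deriv_nonneg (convex_Icc 0 1)
      (fun t _ => (hψ t).continuousAt.continuousWithinAt)
      (fun t _ => (hψ t).differentiableAt.differentiableWithinAt) fun t ht => ?_
    rw [interior_Icc] at ht
    rw [(hψ t).deriv]
    have : ⟪gradient f (x + t • d) - gradient f x, d⟫ ≤ Λ * ‖d‖ ^ 2 * t :=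
      calc _ ≤ ‖gradient f (x + t • d) - gradient f x‖ * ‖d‖ := real_inner_le_norm _ _
        _ ≤ Λ * ‖x + t • d - x‖ * ‖d‖ := by gcongr; exact hlip _ _
        _ = Λ * ‖d‖ ^ 2 * t := by
          rw [add_sub_cancel_left, norm_smul, Real.norm_of_nonneg ht.1.le]; ring
    rw [inner_sub_left] at this
    linarith
  have h01 := hmono ⟨le_rfl, zero_le_one⟩ ⟨zero_le_one, le_rfl⟩ zero_le_one
  simp only [ψ, one_smul, zero_smul, add_zero] at h01
  linarith

theorem sub_le_inner_sub_sq_div_of_quadratic_bounds {f : E → ℝ} {g : E → E} {Λ : ℝ}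
    (hΛ : 0 < Λ) (hupper : ∀ x d, f (x + d) ≤ f x + ⟪g x, d⟫ + Λ / 2 * ‖d‖ ^ 2)
    (hlower : ∀ x y, f x + ⟪g x, y - x⟫ ≤ f y) {xs : E} (hxs : g xs = 0) (x : E) :
    f x - f xs ≤ ⟪g x, x - xs⟫ - ‖g x‖ ^ 2 / (2 * Λ) := by
  have h1 := hlower x (xs + Λ⁻¹ • g x)
  have h2 := hupper xs (Λ⁻¹ • g x)
  rw [hxs, inner_zero_left, norm_smul, Real.norm_of_nonneg (inv_nonneg.2 hΛ.le)] at h2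
  rw [show xs + Λ⁻¹ • g x - x = -(x - xs) + Λ⁻¹ • g x by abel, inner_add_right, inner_neg_right,
    real_inner_smul_right, real_inner_self_eq_norm_sq] at h1
  have : Λ⁻¹ * ‖g x‖ ^ 2 - Λ / 2 * (Λ⁻¹ * ‖g x‖) ^ 2 = ‖g x‖ ^ 2 / (2 * Λ) := by
    field_simp; ring
  linarith

theorem sub_smul_le_of_quadratic_upper_bound {f : E → ℝ} {g : E → E} {Λ : ℝ}
    (hupper : ∀ x d, f (x + d) ≤ f x + ⟪g x, d⟫ + Λ / 2 * ‖d‖ ^ 2) {t : ℝ} (ht : 0 ≤ t)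
    (htΛ : t * Λ ≤ 1) (x : E) : f (x - t • g x) ≤ f x - t / 2 * ‖g x‖ ^ 2 := by
  have h := hupper x (-(t • g x))
  rw [← sub_eq_add_neg, inner_neg_right, real_inner_smul_right, real_inner_self_eq_norm_sq,
    norm_neg, norm_smul, Real.norm_of_nonneg ht] at h
  nlinarith [mul_le_mul_of_nonneg_left htΛ (mul_nonneg ht (sq_nonneg ‖g x‖))]

end ConvexSmooth

section SymmetricOperator

variable {E : Type*} [NormedAddCommGroup E] [InnerProductSpace ℝ E]

theorem inner_add_map_add_of_symm {L : E →L[ℝ] E} (hsym : ∀ x y, ⟪L x, y⟫ = ⟪x, L y⟫)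
    (u d : E) : ⟪u + d, L (u + d)⟫ = ⟪u, L u⟫ + 2 * ⟪L u, d⟫ + ⟪d, L d⟫ := by
  rw [map_add, inner_add_left, inner_add_right, inner_add_right, ← hsym u d,
    real_inner_comm d (L u)]
  ring

theorem real_inner_map_self_le_opNorm_mul_sq (L : E →L[ℝ] E) (v : E) :
    ⟪v, L v⟫ ≤ ‖L‖ * ‖v‖ ^ 2 :=
  calc ⟪v, L v⟫ ≤ ‖v‖ * ‖L v‖ := real_inner_le_norm _ _
    _ ≤ ‖v‖ * (‖L‖ * ‖v‖) := by gcongr; exact L.le_opNorm v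
    _ = ‖L‖ * ‖v‖ ^ 2 := by ring

end SymmetricOperator

section PenalizedGap

variable {E : Type*} [NormedAddCommGroup E] [InnerProductSpace ℝ E]
  {F : E → ℝ} {L : E →L[ℝ] E} {Xs : E} {μ Lf : ℝ}

/-- For `μ = (2θ_k h)^{−β}` the gradient of `penalizedGap μ F L Xs` is `G_k`. -/
def penalizedGap (μ : ℝ) (F : E → ℝ) (L : E →L[ℝ] E) (Xs Y : E) : ℝ :=
  μ * (F Y - F Xs) + 1 / 2 * ⟪Y - Xs, L (Y - Xs)⟫

@[simp]
theorem penalizedGap_self : penalizedGap μ F L Xs Xs = 0 := by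
  simp [penalizedGap]

theorem mul_sub_le_penalizedGap (hpsd : ∀ x, 0 ≤ ⟪x, L x⟫) (Y : E) :
    μ * (F Y - F Xs) ≤ penalizedGap μ F L Xs Y := by
  unfold penalizedGap
  linarith [hpsd (Y - Xs)]

theorem penalizedGap_nonneg (hμ : 0 ≤ μ) (hmin : ∀ Y, F Xs ≤ F Y)
    (hpsd : ∀ x, 0 ≤ ⟪x, L x⟫) (Y : E) : 0 ≤ penalizedGap μ F L Xs Y :=
  (mul_nonneg hμ (sub_nonneg.2 (hmin Y))).trans (mul_sub_le_penalizedGap hpsd Y)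

theorem penalizedGap_add_le [CompleteSpace E] (hF : Differentiable ℝ F)
    (hlip : ∀ x y, ‖gradient F x - gradient F y‖ ≤ Lf * ‖x - y‖)
    (hsym : ∀ x y, ⟪L x, y⟫ = ⟪x, L y⟫) (hXs : L Xs = 0) (hμ : 0 ≤ μ) (x d : E) :
    penalizedGap μ F L Xs (x + d) ≤ penalizedGap μ F L Xs x
      + ⟪μ • gradient F x + L x, d⟫ + (μ * Lf + ‖L‖) / 2 * ‖d‖ ^ 2 := by
  have hFd := mul_le_mul_of_nonneg_left (le_add_inner_gradient_add_sq hF hlip x d) hμ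
  have hLd := real_inner_map_self_le_opNorm_mul_sq L d
  have hLx : L (x - Xs) = L x := by rw [map_sub, hXs, sub_zero]
  unfold penalizedGap
  rw [add_sub_right_comm, inner_add_map_add_of_symm hsym, hLx, inner_add_left,
    real_inner_smul_left]
  linarith

theorem penalizedGap_add_inner_le [CompleteSpace E] (hF : Differentiable ℝ F)
    (hconv : ConvexOn ℝ Set.univ F) (hsym : ∀ x y, ⟪L x, y⟫ = ⟪x, L y⟫)
    (hpsd : ∀ x, 0 ≤ ⟪x, L x⟫) (hXs : L Xs = 0) (hμ : 0 ≤ μ) (x y : E) :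
    penalizedGap μ F L Xs x + ⟪μ • gradient F x + L x, y - x⟫ ≤ penalizedGap μ F L Xs y := by
  have hFy := mul_le_mul_of_nonneg_left (hconv.add_inner_gradient_le hF x y) hμ
  have hq := inner_add_map_add_of_symm hsym (x - Xs) (y - x)
  have hLx : L (x - Xs) = L x := by rw [map_sub, hXs, sub_zero]
  rw [sub_add_sub_cancel', hLx] at hq
  unfold penalizedGap
  rw [hq, hLx, inner_add_left, real_inner_smul_left]
  linarith [hpsd (y - x)]

theorem penalizedGap_le_inner_sub [CompleteSpace E] (hF : Differentiable ℝ F)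
    (hconv : ConvexOn ℝ Set.univ F) (hlip : ∀ x y, ‖gradient F x - gradient F y‖ ≤ Lf * ‖x - y‖)
    (hsym : ∀ x y, ⟪L x, y⟫ = ⟪x, L y⟫) (hpsd : ∀ x, 0 ≤ ⟪x, L x⟫) (hXs : L Xs = 0)
    (hmin : ∀ Y, F Xs ≤ F Y) (hμ : 0 ≤ μ) (hΛ : 0 < μ * Lf + ‖L‖) {s : ℝ}
    (hsΛ : s * (μ * Lf + ‖L‖) ≤ 2) (x : E) :
    penalizedGap μ F L Xs x ≤ ⟪μ • gradient F x + L x, x - Xs⟫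
      - s / 4 * ‖μ • gradient F x + L x‖ ^ 2 := by
  have hstat : μ • gradient F Xs + L Xs = 0 := by
    have hloc : IsLocalMin F Xs := Filter.Eventually.of_forall hmin
    rw [hloc.gradient_eq_zero, hXs, smul_zero, add_zero]
  have := sub_le_inner_sub_sq_div_of_quadratic_bounds hΛ
    (penalizedGap_add_le hF hlip hsym hXs hμ)
    (penalizedGap_add_inner_le hF hconv hsym hpsd hXs hμ) hstat x
  have hs : s / 4 * ‖μ • gradient F x + L x‖ ^ 2
      ≤ ‖μ • gradient F x + L x‖ ^ 2 / (2 * (μ * Lf + ‖L‖)) := by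
    rw [le_div_iff₀ (by positivity)]
    nlinarith [sq_nonneg ‖μ • gradient F x + L x‖]
  rw [penalizedGap_self, sub_zero] at this
  linarith

theorem penalizedGap_sub_smul_le [CompleteSpace E] (hF : Differentiable ℝ F)
    (hlip : ∀ x y, ‖gradient F x - gradient F y‖ ≤ Lf * ‖x - y‖)
    (hsym : ∀ x y, ⟪L x, y⟫ = ⟪x, L y⟫) (hXs : L Xs = 0) (hμ : 0 ≤ μ) {s : ℝ} (hs : 0 ≤ s)
    (hsΛ : s * (μ * Lf + ‖L‖) ≤ 2) (x : E) :
    penalizedGap μ F L Xs (x - (s / 2) • (μ • gradient F x + L x))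
      ≤ penalizedGap μ F L Xs x - s / 4 * ‖μ • gradient F x + L x‖ ^ 2 := by
  have := sub_smul_le_of_quadratic_upper_bound (penalizedGap_add_le hF hlip hsym hXs hμ)
    (by positivity : 0 ≤ s / 2) (by linarith) x
  rwa [div_div, show (2 : ℝ) * 2 = 4 by norm_num] at this

end PenalizedGap

section Coefficients

theorem two_mul_thetaSeq (k : ℕ) : 2 * thetaSeq k = k := by
  unfold thetaSeq; ring

theorem thetaSeq_succ_sq_sub_sq (k : ℕ) :
    thetaSeq (k + 1) ^ 2 - thetaSeq k ^ 2 = (2 * k + 1) / 4 := by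
  unfold thetaSeq; push_cast; ring

theorem ASeq_eq (k : ℕ) : ASeq k = (k : ℝ) ^ 2 * (k + 1) / (2 * (2 * k + 1)) := by
  rw [ASeq, cSeq, thetaSeq_succ_sq_sub_sq]
  unfold thetaSeq
  push_cast
  field_simp
  ring

theorem ASeq_nonneg (k : ℕ) : 0 ≤ ASeq k := by
  rw [ASeq_eq]; positivity

theorem ASeq_one : ASeq 1 = 1 / 3 := by
  rw [ASeq_eq]; norm_num

theorem ASeq_succ_le (k : ℕ) : ASeq (k + 1) ≤ ASeq k + thetaSeq (k + 1) := by
  rw [ASeq_eq, ASeq_eq, thetaSeq]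
  push_cast
  have hk : (0 : ℝ) ≤ k := k.cast_nonneg
  rw [div_add_div _ _ (by positivity) two_ne_zero,
    div_le_div_iff₀ (by positivity) (by positivity)]
  nlinarith [mul_nonneg hk (sq_nonneg (k : ℝ)), sq_nonneg (k : ℝ)]

theorem thetaSeq_succ_sq_le (k : ℕ) :
    2 * thetaSeq (k + 1) ^ 2 ≤ ASeq k + ASeq (k + 1) + thetaSeq (k + 1) := by
  rw [ASeq_eq, ASeq_eq, thetaSeq]
  push_cast
  have hk : (0 : ℝ) ≤ k := k.cast_nonneg
  rw [div_add_div _ _ (by positivity) (by positivity), div_add_div _ _ (by positivity) two_ne_zero,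
    le_div_iff₀ (by positivity)]
  nlinarith [mul_nonneg hk (sq_nonneg (k : ℝ)), sq_nonneg (k : ℝ),
    mul_nonneg hk (mul_nonneg hk (sq_nonneg (k : ℝ)))]

theorem sq_le_four_mul_ASeq (k : ℕ) : (k : ℝ) ^ 2 ≤ 4 * ASeq k := by
  rw [ASeq_eq, mul_div_assoc', le_div_iff₀ (by positivity)]
  nlinarith [sq_nonneg (k : ℝ)]

/-- `X_{k+1}` is the convex combination of `X_k⁺` and `Z_{k+1}` with weights proportional to
`A_k` and `θ_{k+1}`. -/
theorem ASeq_add_thetaSeq_smul {E : Type*} [AddCommGroup E] [Module ℝ E] (k : ℕ) (u v : E) :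
    (ASeq k + thetaSeq (k + 1)) • ((thetaSeq k ^ 2 / thetaSeq (k + 1) ^ 2) • u
      + (1 - thetaSeq k ^ 2 / thetaSeq (k + 1) ^ 2) • v) = ASeq k • u + thetaSeq (k + 1) • v := by
  have hθ : thetaSeq (k + 1) ≠ 0 := by unfold thetaSeq; positivity
  have hc : ASeq k + thetaSeq (k + 1) = cSeq k * thetaSeq (k + 1) ^ 2 := by
    rw [ASeq, cSeq, thetaSeq_succ_sq_sub_sq]
    unfold thetaSeq
    push_cast
    field_simp
    ring
  have hu : (ASeq k + thetaSeq (k + 1)) * (thetaSeq k ^ 2 / thetaSeq (k + 1) ^ 2) = ASeq k := by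
    rw [hc, ASeq]; field_simp
  have hv : (ASeq k + thetaSeq (k + 1)) * (1 - thetaSeq k ^ 2 / thetaSeq (k + 1) ^ 2)
      = thetaSeq (k + 1) := by
    rw [hc, cSeq, thetaSeq_succ_sq_sub_sq]
    unfold thetaSeq; push_cast; field_simp; ring
  rw [smul_add, smul_smul, smul_smul, hu, hv]

def weightSeq (h β : ℝ) (k : ℕ) : ℝ := (2 * thetaSeq k * h) ^ (-β)

theorem weightSeq_eq (h β : ℝ) (k : ℕ) : weightSeq h β k = ((k : ℝ) * h) ^ (-β) := by
  rw [weightSeq, two_mul_thetaSeq]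

theorem weightSeq_pos {h : ℝ} (hh : 0 < h) (β : ℝ) {k : ℕ} (hk : 1 ≤ k) :
    0 < weightSeq h β k := by
  rw [weightSeq_eq]
  have : (0 : ℝ) < k := by exact_mod_cast hk
  positivity

theorem mul_weightSeq_mul_add_le_two {h β Lf lambar s : ℝ} {k : ℕ} (hs : 0 < s)
    (hstep : s ≤ 1 / max lambar (((k : ℝ) * h) ^ (-β) * Lf)) :
    s * (weightSeq h β k * Lf + lambar) ≤ 2 := by
  rw [weightSeq_eq]
  set M := max lambar (((k : ℝ) * h) ^ (-β) * Lf)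
  have hM : 0 < M := by
    by_contra! hM
    linarith [div_nonpos_of_nonneg_of_nonpos zero_le_one hM]
  rw [le_div_iff₀ hM] at hstep
  nlinarith [le_max_left lambar (((k : ℝ) * h) ^ (-β) * Lf),
    le_max_right lambar (((k : ℝ) * h) ^ (-β) * Lf)]

theorem le_mul_rpow_of_two_mul_ASeq_mul_le {h β C D : ℝ} {k : ℕ} (hk : 1 ≤ k) (hh : 0 < h)
    (hC : 0 ≤ C) (hD : 2 * ASeq k * (weightSeq h β k * D) ≤ C) :
    D ≤ 2 * h ^ β * C * (k : ℝ) ^ (-(2 - β)) := by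
  have hk0 : (0 : ℝ) < k := by exact_mod_cast hk
  have hkh : ((k : ℝ) * h) ^ β = (k : ℝ) ^ β * h ^ β := Real.mul_rpow hk0.le hh.le
  have hrate : (k : ℝ) ^ (-(2 - β)) = (k : ℝ) ^ β / (k : ℝ) ^ 2 := by
    rw [show -(2 - β) = β - 2 by ring, Real.rpow_sub hk0, Real.rpow_two]
  set P := (k : ℝ) ^ β * h ^ β
  have hP : 0 < P := by positivity
  rw [weightSeq_eq, Real.rpow_neg (by positivity), hkh] at hD
  have hAD : 2 * ASeq k * D ≤ C * P := by
    have := mul_le_mul_of_nonneg_right hD hP.le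
    rwa [show 2 * ASeq k * (P⁻¹ * D) * P = 2 * ASeq k * D by field_simp] at this
  rw [hrate, show 2 * h ^ β * C * ((k : ℝ) ^ β / (k : ℝ) ^ 2) = 2 * (C * P) / (k : ℝ) ^ 2 by
    ring, le_div_iff₀ (by positivity)]
  rcases le_total 0 D with hD0 | hD0
  · nlinarith [mul_le_mul_of_nonneg_left (sq_le_four_mul_ASeq k) hD0]
  · nlinarith [mul_nonneg hC hP.le, mul_nonpos_of_nonneg_of_nonpos (sq_nonneg (k : ℝ)) hD0]

end Coefficients

section Lyapunov

variable {E : Type*} [NormedAddCommGroup E] [InnerProductSpace ℝ E] [FiniteDimensional ℝ E]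
  {h β : ℝ} {F : E → ℝ} {L : E →L[ℝ] E} {Xs : E} {X Xp Z : ℕ → E} {s : ℕ → ℝ}

theorem Gmap_eq (k : ℕ) (Y : E) :
    Gmap h β F L k Y = weightSeq h β k • gradient F Y + L Y := rfl

theorem VSeq_eq (k : ℕ) :
    VSeq h β F L Xs X Z s k = 2 * ASeq k * (penalizedGap (weightSeq h β k) F L Xs (X k)
      - s k / 4 * ‖Gmap h β F L k (X k)‖ ^ 2) + 1 / s k * ‖Z (k + 1) - Xs‖ ^ 2 := rfl

theorem aSeq_eq (k : ℕ) :
    aSeq h β F L Xs X k = penalizedGap (weightSeq h β k) F L Xs (X k)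
      - penalizedGap (weightSeq h β (k + 1)) F L Xs (X (k + 1))
      - ⟪Gmap h β F L (k + 1) (X (k + 1)), X k - X (k + 1)⟫ := by
  unfold aSeq penalizedGap weightSeq
  ring

theorem rSeq_eq_zero (hmin : ∀ Y, F Xs ≤ F Y) (k : ℕ) : rSeq h β F L Xs X k = 0 := by
  have hloc : IsLocalMin F Xs := Filter.Eventually.of_forall hmin
  simp [rSeq, hloc.gradient_eq_zero]

theorem le_two_mul_aSeq_of_stepSize_cases {k : ℕ} (hmono : s k ≤ s (k + 1))
    (hr : 0 ≤ rSeq h β F L Xs X k)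
    (hcase_nonpos : wSeq h β F L X k ≤ 0 → 0 ≤ rSeq h β F L Xs X k →
      s (k + 1) * bSeq h β F L X k ≤ 4 * aSeq h β F L Xs X k)
    (hcase_pos : 0 < wSeq h β F L X k → 0 ≤ rSeq h β F L Xs X k →
      s (k + 1) * btilSeq h β F L X k ≤ 4 * atilSeq h β F L Xs X s k) :
    s (k + 1) * ‖Gmap h β F L (k + 1) (X (k + 1))‖ ^ 2 / 2
      + s k * ‖Gmap h β F L k (X k)‖ ^ 2 / 2
      - s k * ⟪Gmap h β F L (k + 1) (X (k + 1)), Gmap h β F L k (X k)⟫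
      ≤ 2 * aSeq h β F L Xs X k := by
  rcases le_or_gt (wSeq h β F L X k) 0 with hw | hw
  · have hb := hcase_nonpos hw hr
    rw [bSeq, norm_sub_sq_real, real_inner_comm] at hb
    rw [wSeq] at hw
    nlinarith [mul_nonneg (sub_nonneg.2 hmono) (sq_nonneg ‖Gmap h β F L k (X k)‖)]
  · have hb := hcase_pos hw hr
    rw [btilSeq, atilSeq] at hb
    nlinarith [mul_le_mul_of_nonneg_right hmono (sq_nonneg ‖Gmap h β F L k (X k)‖)]

theorem VSeq_succ_le {k : ℕ} (hs : 0 < s k) (hmono : s k ≤ s (k + 1))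
    (hXp : Xp k = X k - (s k / 2) • Gmap h β F L k (X k))
    (hX : X (k + 1) = (thetaSeq k ^ 2 / thetaSeq (k + 1) ^ 2) • Xp k
        + (1 - thetaSeq k ^ 2 / thetaSeq (k + 1) ^ 2) • Z (k + 1))
    (hZ : Z (k + 1 + 1) = Z (k + 1)
        - (s (k + 1) * thetaSeq (k + 1)) • Gmap h β F L (k + 1) (X (k + 1)))
    (hgap_nonneg : 0 ≤ penalizedGap (weightSeq h β (k + 1)) F L Xs (X (k + 1)))
    (hgap_le : penalizedGap (weightSeq h β (k + 1)) F L Xs (X (k + 1))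
      ≤ ⟪Gmap h β F L (k + 1) (X (k + 1)), X (k + 1) - Xs⟫
        - s (k + 1) / 4 * ‖Gmap h β F L (k + 1) (X (k + 1))‖ ^ 2)
    (hstep : s (k + 1) * ‖Gmap h β F L (k + 1) (X (k + 1))‖ ^ 2 / 2
      + s k * ‖Gmap h β F L k (X k)‖ ^ 2 / 2
      - s k * ⟪Gmap h β F L (k + 1) (X (k + 1)), Gmap h β F L k (X k)⟫
      ≤ 2 * aSeq h β F L Xs X k) :
    VSeq h β F L Xs X Z s (k + 1) ≤ VSeq h β F L Xs X Z s k := by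
  have hs' : 0 < s (k + 1) := hs.trans_le hmono
  set G := Gmap h β F L k (X k)
  set G' := Gmap h β F L (k + 1) (X (k + 1))
  have hcoupling : thetaSeq (k + 1) * ⟪G', Z (k + 1) - Xs⟫
      = thetaSeq (k + 1) * ⟪G', X (k + 1) - Xs⟫ - ASeq k * ⟪G', X k - X (k + 1)⟫
        + ASeq k * s k / 2 * ⟪G', G⟫ := by
    have hcomb := ASeq_add_thetaSeq_smul k (Xp k) (Z (k + 1))
    rw [← hX, hXp] at hcomb
    have hvec : thetaSeq (k + 1) • (Z (k + 1) - Xs) = thetaSeq (k + 1) • (X (k + 1) - Xs)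
        - ASeq k • (X k - X (k + 1)) + (ASeq k * s k / 2) • G := by
      linear_combination (norm := module) (-1 : ℝ) • hcomb
    have := congrArg (fun v => ⟪G', v⟫) hvec
    simpa only [inner_add_right, inner_sub_right, real_inner_smul_right] using this
  have hZnorm : 1 / s (k + 1) * ‖Z (k + 1 + 1) - Xs‖ ^ 2
      = 1 / s (k + 1) * ‖Z (k + 1) - Xs‖ ^ 2 - 2 * thetaSeq (k + 1) * ⟪G', Z (k + 1) - Xs⟫
        + s (k + 1) * thetaSeq (k + 1) ^ 2 * ‖G'‖ ^ 2 := by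
    rw [hZ, sub_right_comm, norm_sub_sq_real, real_inner_smul_right, norm_smul,
      Real.norm_of_nonneg (by unfold thetaSeq; positivity), real_inner_comm]
    field_simp
  have hz : 1 / s (k + 1) * ‖Z (k + 1) - Xs‖ ^ 2 ≤ 1 / s k * ‖Z (k + 1) - Xs‖ ^ 2 :=
    mul_le_mul_of_nonneg_right (one_div_le_one_div_of_le hs hmono) (sq_nonneg _)
  have hA := mul_le_mul_of_nonneg_right (ASeq_succ_le k) hgap_nonneg
  have hθ := mul_le_mul_of_nonneg_left hgap_le
    (by unfold thetaSeq; positivity : (0 : ℝ) ≤ thetaSeq (k + 1))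
  have hθA := mul_le_mul_of_nonneg_right (thetaSeq_succ_sq_le k)
    (by positivity : 0 ≤ s (k + 1) * ‖G'‖ ^ 2)
  have hAstep := mul_le_mul_of_nonneg_left hstep (ASeq_nonneg k)
  rw [VSeq_eq, VSeq_eq, hZnorm]
  rw [aSeq_eq] at hAstep
  linarith

theorem VSeq_one_le (hs0 : 0 < s 0) (hs01 : s 0 ≤ s 1) (hZ1 : Z 1 = X 1)
    (hZ2 : Z (1 + 1) = Z 1 - (s 1 * thetaSeq 1) • Gmap h β F L 1 (X 1))
    (hgap_nonneg : 0 ≤ penalizedGap (weightSeq h β 1) F L Xs (X 1))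
    (hgap_le : penalizedGap (weightSeq h β 1) F L Xs (X 1)
      ≤ ⟪Gmap h β F L 1 (X 1), X 1 - Xs⟫ - s 1 / 4 * ‖Gmap h β F L 1 (X 1)‖ ^ 2) :
    VSeq h β F L Xs X Z s 1 ≤ ‖X 1 - Xs‖ ^ 2 / s 0 := by
  have hs1 : 0 < s 1 := hs0.trans_le hs01
  have hZnorm : 1 / s 1 * ‖Z (1 + 1) - Xs‖ ^ 2 = 1 / s 1 * ‖X 1 - Xs‖ ^ 2
      - ⟪Gmap h β F L 1 (X 1), X 1 - Xs⟫ + s 1 / 4 * ‖Gmap h β F L 1 (X 1)‖ ^ 2 := by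
    rw [hZ2, hZ1, sub_right_comm, norm_sub_sq_real, real_inner_smul_right, norm_smul,
      Real.norm_of_nonneg (by unfold thetaSeq; positivity), real_inner_comm, thetaSeq]
    field_simp
    ring
  have hX : 1 / s 1 * ‖X 1 - Xs‖ ^ 2 ≤ ‖X 1 - Xs‖ ^ 2 / s 0 := by
    rw [one_div_mul_eq_div]
    exact div_le_div_of_nonneg_left (sq_nonneg _) hs0 hs01
  rw [VSeq_eq, ASeq_one, hZnorm]
  nlinarith [sq_nonneg ‖Gmap h β F L 1 (X 1)‖]

theorem two_mul_ASeq_mul_le_VSeq {k : ℕ} (hs : 0 < s k)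
    (hpsd : ∀ x, 0 ≤ ⟪x, L x⟫)
    (hdesc : penalizedGap (weightSeq h β k) F L Xs (Xp k)
      ≤ penalizedGap (weightSeq h β k) F L Xs (X k) - s k / 4 * ‖Gmap h β F L k (X k)‖ ^ 2) :
    2 * ASeq k * (weightSeq h β k * (F (Xp k) - F Xs)) ≤ VSeq h β F L Xs X Z s k := by
  have hgap := (mul_sub_le_penalizedGap hpsd (Xp k)).trans hdesc
  rw [VSeq_eq]
  have := mul_le_mul_of_nonneg_left hgap (by linarith [ASeq_nonneg k] : (0 : ℝ) ≤ 2 * ASeq k)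
  have : 0 ≤ 1 / s k * ‖Z (k + 1) - Xs‖ ^ 2 := by positivity
  linarith

end Lyapunov

theorem discretized_distAGM_convergence_rate_general
    (F : H → ℝ) (hF : Differentiable ℝ F) (hconv : ConvexOn ℝ Set.univ F)
    (Lf : ℝ) (hLf : 0 < Lf)
    (hlip : ∀ x y : H, ‖gradient F x - gradient F y‖ ≤ Lf * ‖x - y‖)
    (L : H →L[ℝ] H) (hsym : ∀ x y : H, ⟪L x, y⟫ = ⟪x, L y⟫)
    (hpsd : ∀ x : H, 0 ≤ ⟪x, L x⟫)
    (lambar : ℝ) (hlam : ‖L‖ = lambar)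
    (Xs : H) (hXs : L Xs = 0) (hmin : ∀ Y : H, F Xs ≤ F Y)
    (h β : ℝ) (hh : 0 < h)
    (X Xp Z : ℕ → H) (s : ℕ → ℝ)
    (hspos : ∀ k, 1 ≤ k → 0 < s k)
    (hXp : ∀ k, 1 ≤ k → Xp k = X k - (s k / 2) • Gmap h β F L k (X k))
    (hZupd : ∀ k, 1 ≤ k → Z (k + 1) = Z k - (s k * thetaSeq k) • Gmap h β F L k (X k))
    (hXupd : ∀ k, 1 ≤ k → X (k + 1) = (thetaSeq k ^ 2 / thetaSeq (k + 1) ^ 2) • Xp k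
        + (1 - thetaSeq k ^ 2 / thetaSeq (k + 1) ^ 2) • Z (k + 1))
    (hinit : X 0 = Z 0)
    (hZ1 : Z 1 = Z 0) (hX1 : X 1 = X 0)
    (hs0 : 0 < s 0) (hs01 : s 0 ≤ s 1)
    (hcases : ∀ k, 1 ≤ k →
      (wSeq h β F L X k ≤ 0 → 0 ≤ rSeq h β F L Xs X k →
        s (k + 1) * bSeq h β F L X k ≤ 4 * aSeq h β F L Xs X k)
      ∧ (wSeq h β F L X k ≤ 0 → rSeq h β F L Xs X k < 0 →
        s (k + 1) * (ASeq k * bSeq h β F L X k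
            + thetaSeq (k + 1) * (-(rSeq h β F L Xs X k)))
          ≤ 4 * ASeq k * aSeq h β F L Xs X k)
      ∧ (0 < wSeq h β F L X k → 0 ≤ rSeq h β F L Xs X k →
        s (k + 1) * btilSeq h β F L X k ≤ 4 * atilSeq h β F L Xs X s k)
      ∧ (0 < wSeq h β F L X k → rSeq h β F L Xs X k < 0 →
        s (k + 1) * (ASeq k * btilSeq h β F L X k
            + thetaSeq (k + 1) * (-(rSeq h β F L Xs X k)))
          ≤ 4 * ASeq k * atilSeq h β F L Xs X s k))
    (hmono : ∀ k, 1 ≤ k → s k ≤ s (k + 1))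
    (hstep : ∀ k, 1 ≤ k → s k ≤ 1 / max lambar (((k : ℝ) * h) ^ (-β) * Lf)) :
    ∀ k, 1 ≤ k →
      F (Xp k) - F Xs
        ≤ (2 * h ^ β * ‖X 0 - Xs‖ ^ 2 / s 0) * (k : ℝ) ^ (-(2 - β)) := by
  have hweight : ∀ k, 1 ≤ k → 0 < weightSeq h β k := fun k hk => weightSeq_pos hh β hk
  have hsΛ : ∀ k, 1 ≤ k → s k * (weightSeq h β k * Lf + ‖L‖) ≤ 2 := fun k hk =>
    hlam ▸ mul_weightSeq_mul_add_le_two (hspos k hk) (hstep k hk)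
  have hgap_nonneg : ∀ k, 1 ≤ k → 0 ≤ penalizedGap (weightSeq h β k) F L Xs (X k) :=
    fun k hk => penalizedGap_nonneg (hweight k hk).le hmin hpsd (X k)
  have hgap_le : ∀ k, 1 ≤ k → penalizedGap (weightSeq h β k) F L Xs (X k)
      ≤ ⟪Gmap h β F L k (X k), X k - Xs⟫ - s k / 4 * ‖Gmap h β F L k (X k)‖ ^ 2 :=
    fun k hk => penalizedGap_le_inner_sub hF hconv hlip hsym hpsd hXs hmin (hweight k hk).le
      (add_pos_of_pos_of_nonneg (mul_pos (hweight k hk) hLf) (norm_nonneg L)) (hsΛ k hk) (X k)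
  have hV1 : VSeq h β F L Xs X Z s 1 ≤ ‖X 0 - Xs‖ ^ 2 / s 0 := hX1 ▸
    VSeq_one_le hs0 hs01 (by rw [hZ1, ← hinit, hX1]) (hZupd 1 le_rfl) (hgap_nonneg 1 le_rfl)
      (hgap_le 1 le_rfl)
  have hV : ∀ k, 1 ≤ k → VSeq h β F L Xs X Z s k ≤ VSeq h β F L Xs X Z s 1 := by
    intro k hk
    induction k, hk using Nat.le_induction with
    | base => exact le_rfl
    | succ k hk ih =>
      exact (VSeq_succ_le (hspos k hk) (hmono k hk) (hXp k hk) (hXupd k hk)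
        (hZupd (k + 1) (by omega)) (hgap_nonneg (k + 1) (by omega)) (hgap_le (k + 1) (by omega))
        (le_two_mul_aSeq_of_stepSize_cases (hmono k hk) (rSeq_eq_zero hmin k).ge
          (hcases k hk).1 (hcases k hk).2.2.1)).trans ih
  intro k hk
  have hdesc := penalizedGap_sub_smul_le hF hlip hsym hXs (hweight k hk).le (hspos k hk).le
    (hsΛ k hk) (X k)
  rw [← Gmap_eq, ← hXp k hk] at hdesc
  rw [mul_div_assoc]
  exact le_mul_rpow_of_two_mul_ASeq_mul_le hk hh (div_nonneg (sq_nonneg _) hs0.le)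
    ((two_mul_ASeq_mul_le_VSeq (hspos k hk) hpsd hdesc).trans ((hV k hk).trans hV1))

/-- Theorem 2: convergence rate of the discretized distributed AGM algorithm:
`F(X_k⁺) − F* ≤ (2h^β ‖X₀ − X*‖²/s₀)·k^{−(2−β)}` for every `k ≥ 1`. -/
theorem discretized_distAGM_convergence_rate
    (F : H → ℝ) (hF : Differentiable ℝ F) (hconv : ConvexOn ℝ Set.univ F)
    (Lf : ℝ) (hLf : 0 < Lf)
    (hlip : ∀ x y : H, ‖gradient F x - gradient F y‖ ≤ Lf * ‖x - y‖)
    (L : H →L[ℝ] H) (hsym : ∀ x y : H, ⟪L x, y⟫ = ⟪x, L y⟫)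
    (hpsd : ∀ x : H, 0 ≤ ⟪x, L x⟫)
    (lambar : ℝ) (hlam : ‖L‖ = lambar)
    (Xs : H) (hXs : L Xs = 0) (hmin : ∀ Y : H, F Xs ≤ F Y)
    (h β : ℝ) (hh : 0 < h) (hβ0 : 0 < β) (hβ2 : β < 2)
    (X Xp Z : ℕ → H) (s : ℕ → ℝ)
    (hspos : ∀ k, 1 ≤ k → 0 < s k)
    (hXp : ∀ k, 1 ≤ k → Xp k = X k - (s k / 2) • Gmap h β F L k (X k))
    (hZupd : ∀ k, 1 ≤ k → Z (k + 1) = Z k - (s k * thetaSeq k) • Gmap h β F L k (X k))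
    (hXupd : ∀ k, 1 ≤ k → X (k + 1) = (thetaSeq k ^ 2 / thetaSeq (k + 1) ^ 2) • Xp k
        + (1 - thetaSeq k ^ 2 / thetaSeq (k + 1) ^ 2) • Z (k + 1))
    (hinit : X 0 = Z 0)
    (hXp0 : Xp 0 = X 0) (hZ1 : Z 1 = Z 0) (hX1 : X 1 = X 0)
    (hs0 : 0 < s 0) (hs01 : s 0 ≤ s 1)
    (hs1 : s 1 ≤ 2 / LSmooth lambar Lf h β 1)
    (hr1 : 0 ≤ rSeq h β F L Xs X 0)
    (hcases : ∀ k, 1 ≤ k →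
      (wSeq h β F L X k ≤ 0 → 0 ≤ rSeq h β F L Xs X k →
        s (k + 1) * bSeq h β F L X k ≤ 4 * aSeq h β F L Xs X k)
      ∧ (wSeq h β F L X k ≤ 0 → rSeq h β F L Xs X k < 0 →
        s (k + 1) * (ASeq k * bSeq h β F L X k
            + thetaSeq (k + 1) * (-(rSeq h β F L Xs X k)))
          ≤ 4 * ASeq k * aSeq h β F L Xs X k)
      ∧ (0 < wSeq h β F L X k → 0 ≤ rSeq h β F L Xs X k →
        s (k + 1) * btilSeq h β F L X k ≤ 4 * atilSeq h β F L Xs X s k)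
      ∧ (0 < wSeq h β F L X k → rSeq h β F L Xs X k < 0 →
        s (k + 1) * (ASeq k * btilSeq h β F L X k
            + thetaSeq (k + 1) * (-(rSeq h β F L Xs X k)))
          ≤ 4 * ASeq k * atilSeq h β F L Xs X s k))
    (hmono : ∀ k, 1 ≤ k → s k ≤ s (k + 1))
    (hstep : ∀ k, 1 ≤ k → s k ≤ 1 / max lambar (((k : ℝ) * h) ^ (-β) * Lf)) :
    ∀ k, 1 ≤ k →
      F (Xp k) - F Xs
        ≤ (2 * h ^ β * ‖X 0 - Xs‖ ^ 2 / s 0) * (k : ℝ) ^ (-(2 - β)) :=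
  discretized_distAGM_convergence_rate_general F hF hconv Lf hLf hlip L hsym hpsd lambar hlam Xs hXs
    hmin h β hh X Xp Z s hspos hXp hZupd hXupd hinit hZ1 hX1 hs0 hs01 hcases hmono hstep
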